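/- For all integers n > k > 0, Σ_{l=1}^{n-k} Σ_{a_1 + ⋯ + a_l = n-k, a_i ≥ 1} ( (n-k)! / (a_1! ⋯ a_l!) ) · ∏_{i=1}^{l} (a_1 + ⋯ + a_i + k - 1)^{2 a_i} ≤ (n-1)^{2(n-k)} · S_{n-k}(n-k), where S_k(m) = 1^k + 2^k + ⋯ + m^k. -/
import Mathlib

open Finset in
lemma mult_sum_le (l m : ℕ) :
    ∑ a : Fin l → Fin (m + 1),
      (if (∀ i, 1 ≤ (a i : ℕ)) ∧ (∑ i, (a i : ℕ)) = m then
        Nat.multinomial Finset.univ (fun i => (a i : ℕ)) else 0) ≤ l ^ m := by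
  classical
  rw [← Finset.sum_filter]
  set s := Finset.univ.filter (fun a : Fin l → Fin (m+1) =>
    (∀ i, 1 ≤ (a i : ℕ)) ∧ (∑ i, (a i : ℕ)) = m) with hs
  have hinj : Set.InjOn (fun a : Fin l → Fin (m+1) => (fun i => (a i : ℕ))) s := by
    intro a _ b _ h
    funext i
    exact Fin.ext (congrFun h i)
  have himg : s.image (fun a : Fin l → Fin (m+1) => (fun i => (a i : ℕ))) ⊆
      Finset.piAntidiag Finset.univ m := by
    intro f hf
    simp only [Finset.mem_image] at hf
    obtain ⟨a, ha, rfl⟩ := hf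
    simp only [hs, Finset.mem_filter] at ha
    simp [Finset.mem_piAntidiag, ha.2.2]
  calc ∑ a ∈ s, Nat.multinomial Finset.univ (fun i => (a i : ℕ))
      = ∑ f ∈ s.image (fun a : Fin l → Fin (m+1) => (fun i => (a i : ℕ))),
        Nat.multinomial Finset.univ f := by
        rw [Finset.sum_image (fun a ha b hb h => hinj ha hb h)]
    _ ≤ ∑ f ∈ Finset.piAntidiag Finset.univ m, Nat.multinomial Finset.univ f :=
        Finset.sum_le_sum_of_subset himg
    _ = l ^ m := by
        have := Finset.sum_pow_eq_sum_piAntidiag (Finset.univ : Finset (Fin l))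
          (fun _ => (1 : ℕ)) m
        simp at this
        simpa using this.symm

open Classical in
/-- The composition sum with multinomial weights is bounded above by
`(n-1)^{2(n-k)} · S_{n-k}(n-k)`, where `S_k(m) = 1^k + ⋯ + m^k`. -/
theorem composition_sum_le (n k : ℕ) (h1 : 0 < k) (h2 : k < n) :
    (∑ l ∈ Finset.Icc 1 (n - k),
      ∑ a : Fin l → Fin (n - k + 1),
        (if (∀ i, 1 ≤ (a i : ℕ)) ∧ (∑ i, (a i : ℕ)) = n - k then
          ((Nat.factorial (n - k) : ℝ) / ∏ i, (Nat.factorial (a i : ℕ) : ℝ)) *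
            ∏ i : Fin l,
              ((∑ j ∈ Finset.univ.filter (· ≤ i), ((a j : ℕ) : ℝ)) + (k : ℝ) - 1)
                ^ (2 * (a i : ℕ))
        else 0)) ≤
    ((n : ℝ) - 1) ^ (2 * (n - k)) * ∑ l ∈ Finset.Icc 1 (n - k), (l : ℝ) ^ (n - k) := by
  set m := n - k with hm
  have hn1 : (1 : ℝ) ≤ (n : ℝ) - 1 := by
    have : 2 ≤ n := by omega
    have : (2 : ℝ) ≤ (n : ℝ) := by exact_mod_cast this
    linarith
  have hmn : (m : ℝ) + (k : ℝ) - 1 = (n : ℝ) - 1 := by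
    have : m + k = n := by omega
    have := congrArg (Nat.cast (R := ℝ)) this
    push_cast at this
    linarith
  rw [Finset.mul_sum]
  refine Finset.sum_le_sum fun l _ => ?_
  -- per-term bound
  have step1 : ∀ a : Fin l → Fin (m + 1),
      (if (∀ i, 1 ≤ (a i : ℕ)) ∧ (∑ i, (a i : ℕ)) = m then
        ((Nat.factorial m : ℝ) / ∏ i, (Nat.factorial (a i : ℕ) : ℝ)) *
          ∏ i : Fin l,
            ((∑ j ∈ Finset.univ.filter (· ≤ i), ((a j : ℕ) : ℝ)) + (k : ℝ) - 1)
              ^ (2 * (a i : ℕ))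
      else 0) ≤
      (if (∀ i, 1 ≤ (a i : ℕ)) ∧ (∑ i, (a i : ℕ)) = m then
        ((Nat.multinomial Finset.univ (fun i => (a i : ℕ)) : ℕ) : ℝ) *
          ((n : ℝ) - 1) ^ (2 * m)
      else 0) := by
    intro a
    split_ifs with ha
    · obtain ⟨hpos, hsum⟩ := ha
      -- factorial quotient equals multinomial
      have hfac : ((Nat.factorial m : ℝ) / ∏ i, (Nat.factorial (a i : ℕ) : ℝ)) =
          ((Nat.multinomial Finset.univ (fun i => (a i : ℕ)) : ℕ) : ℝ) := by
        have hspec := Nat.multinomial_spec (Finset.univ : Finset (Fin l))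
          (fun i => (a i : ℕ))
        rw [hsum] at hspec
        have hne : (∏ i, (Nat.factorial (a i : ℕ) : ℝ)) ≠ 0 :=
          Finset.prod_ne_zero_iff.2 fun i _ => by positivity
        rw [div_eq_iff hne, ← hspec]
        push_cast
        ring
      rw [hfac]
      refine mul_le_mul_of_nonneg_left ?_ (by positivity)
      -- bound the product
      have hbase : ∀ i : Fin l,
          0 ≤ (∑ j ∈ Finset.univ.filter (· ≤ i), ((a j : ℕ) : ℝ)) + (k : ℝ) - 1 ∧
          (∑ j ∈ Finset.univ.filter (· ≤ i), ((a j : ℕ) : ℝ)) + (k : ℝ) - 1 ≤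
            (n : ℝ) - 1 := by
        intro i
        have hle : (∑ j ∈ Finset.univ.filter (· ≤ i), ((a j : ℕ) : ℝ)) ≤ (m : ℝ) := by
          have : (∑ j ∈ Finset.univ.filter (· ≤ i), (a j : ℕ)) ≤ ∑ j, (a j : ℕ) :=
            Finset.sum_le_sum_of_subset (Finset.filter_subset _ _)
          rw [hsum] at this
          calc (∑ j ∈ Finset.univ.filter (· ≤ i), ((a j : ℕ) : ℝ))
              = ((∑ j ∈ Finset.univ.filter (· ≤ i), (a j : ℕ) : ℕ) : ℝ) := by push_cast; rfl
            _ ≤ (m : ℝ) := by exact_mod_cast this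
        have hge : (1 : ℝ) ≤ (∑ j ∈ Finset.univ.filter (· ≤ i), ((a j : ℕ) : ℝ)) := by
          have hi : i ∈ Finset.univ.filter (· ≤ i) := by simp
          have := Finset.single_le_sum
            (f := fun j => ((a j : ℕ) : ℝ)) (fun j _ => by positivity) hi
          have h1 : (1 : ℝ) ≤ ((a i : ℕ) : ℝ) := by exact_mod_cast hpos i
          linarith
        have hk : (1 : ℝ) ≤ (k : ℝ) := by exact_mod_cast h1
        constructor
        · linarith
        · linarith [hmn]
      calc ∏ i : Fin l,
            ((∑ j ∈ Finset.univ.filter (· ≤ i), ((a j : ℕ) : ℝ)) + (k : ℝ) - 1)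
              ^ (2 * (a i : ℕ))
          ≤ ∏ i : Fin l, ((n : ℝ) - 1) ^ (2 * (a i : ℕ)) := by
            refine Finset.prod_le_prod (fun i _ => pow_nonneg (hbase i).1 _) fun i _ => ?_
            exact pow_le_pow_left₀ (hbase i).1 (hbase i).2 _
        _ = ((n : ℝ) - 1) ^ (2 * m) := by
            rw [Finset.prod_pow_eq_pow_sum]
            congr 1
            rw [← Finset.mul_sum, hsum]
    · exact le_rfl
  refine le_trans (Finset.sum_le_sum fun a _ => step1 a) ?_
  calc (∑ a : Fin l → Fin (m + 1),
        (if (∀ i, 1 ≤ (a i : ℕ)) ∧ (∑ i, (a i : ℕ)) = m then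
          ((Nat.multinomial Finset.univ (fun i => (a i : ℕ)) : ℕ) : ℝ) *
            ((n : ℝ) - 1) ^ (2 * m)
        else 0))
      = ((n : ℝ) - 1) ^ (2 * m) *
        ((∑ a : Fin l → Fin (m + 1),
          (if (∀ i, 1 ≤ (a i : ℕ)) ∧ (∑ i, (a i : ℕ)) = m then
            Nat.multinomial Finset.univ (fun i => (a i : ℕ)) else 0) : ℕ) : ℝ) := by
        push_cast
        rw [Finset.mul_sum]
        refine Finset.sum_congr rfl fun a _ => ?_
        split_ifs <;> ring
    _ ≤ ((n : ℝ) - 1) ^ (2 * m) * (l : ℝ) ^ m := by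
        refine mul_le_mul_of_nonneg_left ?_ (by positivity)
        have := mult_sum_le l m
        calc ((∑ a : Fin l → Fin (m + 1), _ : ℕ) : ℝ) ≤ ((l ^ m : ℕ) : ℝ) := by
              exact_mod_cast this
          _ = (l : ℝ) ^ m := by push_cast; ring
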